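/- For any preparation map R, the co-interaction identity Δ M_R = (M_R ⊗ M_R⁺)Δ holds if and only if the identity Δ M_R^× = (M_R^× ⊗ M_R⁺)Δ holds. -/

import Mathlib

/-!
`T` stands for `𝒯`, with basis `bT` indexed by the decorated trees `ι`, degree `deg` and noise
count `nXi`; `Tp` stands for the Hopf algebra `𝒯⁺`, with `ℳ⁺ = LinearMap.mul' ℝ Tp`.
`Δ : T →ₗ T ⊗ Tp` is the co-action and `I a` the abstract integration map `𝓘_a`.

Since `R` commutes with the co-action, `(M_R ⊗ M_R⁺)Δ = (M_R^× ⊗ M_R⁺)(R ⊗ Id)Δ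
= (M_R^× ⊗ M_R⁺)ΔR`, so both sides of the first identity are those of the second one
precomposed with the surjective map `R`.
-/

open scoped TensorProduct
attribute [local instance] Classical.propDecidable
noncomputable section

abbrev MIdx (d : ℕ) := Fin d → ℕ

def MIdx.nrm {d : ℕ} (a : MIdx d) : ℕ := ∑ j, a j

def MIdx.fact {d : ℕ} (a : MIdx d) : ℕ := ∏ j, Nat.factorial (a j)

/-- The map `(Id ⊗ ℳ⁺)(Δ ⊗ Id) : 𝒯 ⊗ 𝒯⁺ → 𝒯 ⊗ 𝒯⁺`. -/
def hatA {T Tp : Type} [CommRing T] [Algebra ℝ T] [CommRing Tp] [Algebra ℝ Tp]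
    (Δ : T →ₗ[ℝ] T ⊗[ℝ] Tp) : T ⊗[ℝ] Tp →ₗ[ℝ] T ⊗[ℝ] Tp :=
  (TensorProduct.map LinearMap.id (LinearMap.mul' ℝ Tp)) ∘ₗ
    (TensorProduct.assoc ℝ T Tp Tp).toLinearMap ∘ₗ
      (TensorProduct.map Δ LinearMap.id)

structure IsPreparation {d : ℕ} {T Tp : Type} [CommRing T] [Algebra ℝ T]
    [CommRing Tp] [Algebra ℝ Tp] {ι : Type} (bT : Module.Basis ι ℝ T)
    (deg : ι → ℝ) (nXi : ι → ℕ) (isPoly : ι → Prop)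
    (Δ : T →ₗ[ℝ] T ⊗[ℝ] Tp) (I : MIdx d → T →ₗ[ℝ] T)
    (R : T →ₗ[ℝ] T) : Prop where
  fix_poly : ∀ i, isPoly i → R (bT i) = bT i
  triangular : ∀ i, R (bT i) - bT i ∈
      Submodule.span ℝ {x : T | ∃ j, deg i ≤ deg j ∧ nXi j < nXi i ∧ x = bT j}
  comm_coaction : (TensorProduct.map R LinearMap.id) ∘ₗ Δ = Δ ∘ₗ R
  fix_integration : ∀ a, R ∘ₗ I a = I a

def DegreePreserving {T : Type} [CommRing T] [Algebra ℝ T] {ι : Type}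
    (bT : Module.Basis ι ℝ T) (deg : ι → ℝ) (nXi : ι → ℕ) (R : T →ₗ[ℝ] T) : Prop :=
  ∀ i, R (bT i) - bT i ∈
    Submodule.span ℝ {x : T | ∃ j, deg j = deg i ∧ nXi j < nXi i ∧ x = bT j}

theorem map_comp_coaction_iff_of_surjective {S A B A' B' : Type*} [CommSemiring S]
    [AddCommMonoid A] [Module S A] [AddCommMonoid B] [Module S B]
    [AddCommMonoid A'] [Module S A'] [AddCommMonoid B'] [Module S B']
    {Δ : A →ₗ[S] A ⊗[S] B} {Δ' : A' →ₗ[S] A' ⊗[S] B'} {r : A →ₗ[S] A}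
    {f : A →ₗ[S] A'} {g : B →ₗ[S] B'}
    (hr : r.rTensor B ∘ₗ Δ = Δ ∘ₗ r) (hr_surj : Function.Surjective r) :
    Δ' ∘ₗ (f ∘ₗ r) = TensorProduct.map (f ∘ₗ r) g ∘ₗ Δ ↔
      Δ' ∘ₗ f = TensorProduct.map f g ∘ₗ Δ := by
  have hmap : TensorProduct.map (f ∘ₗ r) g ∘ₗ Δ = (TensorProduct.map f g ∘ₗ Δ) ∘ₗ r := by
    rw [← LinearMap.map_comp_rTensor, LinearMap.comp_assoc, hr, LinearMap.comp_assoc]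
  rw [hmap, ← LinearMap.comp_assoc, LinearMap.cancel_right hr_surj]

theorem cointeraction_iff_cointeraction_mult_general
    {d : ℕ} {T Tp : Type} [CommRing T] [Algebra ℝ T] [CommRing Tp] [Algebra ℝ Tp]
    {ι : Type} (bT : Module.Basis ι ℝ T)
    (deg : ι → ℝ) (nXi : ι → ℕ) (isPoly : ι → Prop)
    (Δ : T →ₗ[ℝ] T ⊗[ℝ] Tp)
    (I : MIdx d → T →ₗ[ℝ] T)
    -- a preparation map `R`
    (R : T →ₗ[ℝ] T) (hR : IsPreparation bT deg nXi isPoly Δ I R)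
    -- the multiplicative map `M_R^×`, with `M_R := M_R^× ∘ R`
    (MRx : T →ₐ[ℝ] T)
    (MRp : Tp →ₐ[ℝ] Tp)
    (hRbij : Function.Bijective R) :
    (Δ ∘ₗ (MRx.toLinearMap ∘ₗ R) =
        (TensorProduct.map (MRx.toLinearMap ∘ₗ R) MRp.toLinearMap) ∘ₗ Δ) ↔
      (Δ ∘ₗ MRx.toLinearMap =
        (TensorProduct.map MRx.toLinearMap MRp.toLinearMap) ∘ₗ Δ) :=
  map_comp_coaction_iff_of_surjective hR.comm_coaction hRbij.surjective

/-- For any preparation map `R`, the co-interaction identity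
`Δ M_R = (M_R ⊗ M_R⁺)Δ` holds if and only if the identity
`Δ M_R^× = (M_R^× ⊗ M_R⁺)Δ` holds.  (Recall that `R` is invertible by its
triangular structure, which is recorded here as a hypothesis.) -/
theorem cointeraction_iff_cointeraction_mult
    {d : ℕ} {T Tp : Type} [CommRing T] [Algebra ℝ T] [CommRing Tp] [Algebra ℝ Tp]
    {ι : Type} (bT : Module.Basis ι ℝ T)
    (deg : ι → ℝ) (nXi : ι → ℕ) (isPoly : ι → Prop)
    (Δ : T →ₗ[ℝ] T ⊗[ℝ] Tp)
    (I : MIdx d → T →ₗ[ℝ] T) (Ip : MIdx d → T →ₗ[ℝ] Tp) (XTp : MIdx d → Tp)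
    -- a preparation map `R`
    (R : T →ₗ[ℝ] T) (hR : IsPreparation bT deg nXi isPoly Δ I R)
    -- the multiplicative map `M_R^×`, with `M_R := M_R^× ∘ R`
    (MRx : T →ₐ[ℝ] T)
    (hMRx : ∀ (a : MIdx d) (τ : T), MRx (I a τ) = I a (MRx (R τ)))
    -- the maps `δ_R` and `M_R⁺` defined by `(Id ⊗ ℳ⁺)(Δ ⊗ Id)δ_R = (M_R ⊗ M_R⁺)Δ`
    (δR : T →ₗ[ℝ] T ⊗[ℝ] Tp) (MRp : Tp →ₐ[ℝ] Tp)
    (hMRpX : ∀ k, MRp (XTp k) = XTp k)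
    (hMRpI : ∀ (a : MIdx d) (τ : T), MRp (Ip a τ) =
      LinearMap.mul' ℝ Tp ((TensorProduct.map (Ip a) LinearMap.id) (δR τ)))
    (hδR : hatA Δ ∘ₗ δR =
      (TensorProduct.map (MRx.toLinearMap ∘ₗ R) MRp.toLinearMap) ∘ₗ Δ)
    (hRbij : Function.Bijective R) :
    (Δ ∘ₗ (MRx.toLinearMap ∘ₗ R) =
        (TensorProduct.map (MRx.toLinearMap ∘ₗ R) MRp.toLinearMap) ∘ₗ Δ) ↔
      (Δ ∘ₗ MRx.toLinearMap =
        (TensorProduct.map MRx.toLinearMap MRp.toLinearMap) ∘ₗ Δ) :=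
  cointeraction_iff_cointeraction_mult_general bT deg nXi isPoly Δ I R hR MRx MRp hRbij
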